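/- Let (x_n, y_n, z_n, v_n) be the orbit of the level-3 local structure map L for rule 14 started at (x_0, y_0, z_0, v_0) = (1/2, 1/4, 1/8, 1/8). Then x_n − y_n = 1/4 for all n ≥ 0, and v_n = y_n − 1/4 for all n ≥ 1. -/

import Mathlib

/-! `x - y` is a conserved quantity of `L`, and the last coordinate of `L p` exceeds the second
by `3 (x - y) - 1`; along the orbit of `(1/2, 1/4, 1/8, 1/8)` this excess is `-1/4`.
Neither fact involves the third coordinate, the only place where the fraction enters. -/

open Filter

/-- Level-3 local structure map for rule 14.  In Lean, division by zero
yields zero, which matches the convention that the fraction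
`v(y-z)z/(y(x-y))` is taken to be `0` whenever `y(x-y) = 0`. -/
noncomputable def L (p : ℝ × ℝ × ℝ × ℝ) : ℝ × ℝ × ℝ × ℝ :=
  match p with
  | (x, y, z, v) =>
    (-x + z + 1,
     -2 * x + y + z + 1,
     1 + z + v - 3 * x + 2 * y - v * (y - z) * z / (y * (x - y)),
     x - 2 * y + z)

lemma L_fst_sub_snd_fst (p : ℝ × ℝ × ℝ × ℝ) : (L p).1 - (L p).2.1 = p.1 - p.2.1 := by
  obtain ⟨x, y, z, v⟩ := p
  simp only [L]
  ring

lemma L_snd_snd_snd (p : ℝ × ℝ × ℝ × ℝ) :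
    (L p).2.2.2 = (L p).2.1 + 3 * (p.1 - p.2.1) - 1 := by
  obtain ⟨x, y, z, v⟩ := p
  simp only [L]
  ring

lemma iterate_L_fst_sub_snd_fst (n : ℕ) (p : ℝ × ℝ × ℝ × ℝ) :
    (L^[n] p).1 - (L^[n] p).2.1 = p.1 - p.2.1 := by
  induction n with
  | zero => rfl
  | succ n ih => rw [Function.iterate_succ_apply', L_fst_sub_snd_fst, ih]

theorem local_structure_invariants :
    (∀ n : ℕ,
      (L^[n] (1/2, 1/4, 1/8, 1/8)).1 - (L^[n] (1/2, 1/4, 1/8, 1/8)).2.1 = 1/4) ∧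
    (∀ n : ℕ, 1 ≤ n →
      (L^[n] (1/2, 1/4, 1/8, 1/8)).2.2.2
        = (L^[n] (1/2, 1/4, 1/8, 1/8)).2.1 - 1/4) := by
  have hdiff : ∀ n : ℕ,
      (L^[n] (1/2, 1/4, 1/8, 1/8)).1 - (L^[n] (1/2, 1/4, 1/8, 1/8)).2.1 = 1/4 := fun n => by
    rw [iterate_L_fst_sub_snd_fst]
    norm_num
  refine ⟨hdiff, fun n hn => ?_⟩
  obtain ⟨m, rfl⟩ := Nat.exists_eq_add_of_le' hn
  rw [Function.iterate_succ_apply', L_snd_snd_snd, hdiff m]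
  ring
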